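/- arXiv:1310.2104 — 2 statements merged into one kernel-verified Lean document; each statement's English description precedes it below -/
import Mathlib

section
/- For every positive integer n, the derivative formula d/dx CP_n^{(k)}(x;λ,μ) = n! · Σ_{l=0}^{n-1} ((-1)^{n-l} / ((n-l)·l!)) · CP_l^{(k)}(x;λ,μ) holds. -/
open PowerSeries Finset

noncomputable section

/-- The formal power series log(1+t). -/
def logS : PowerSeries ℝ :=
  PowerSeries.mk fun n => if n = 0 then 0 else (-1) ^ (n + 1) / n

/-- Composition of formal power series (valid when `g` has zero constant term). -/
def compS (f g : PowerSeries ℝ) : PowerSeries ℝ :=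
  PowerSeries.mk fun n =>
    ∑ m ∈ Finset.range (n + 1), (PowerSeries.coeff m f) * PowerSeries.coeff n (g ^ m)

/-- The formal power series (1+t)^x = Σ (x)_n t^n / n!. -/
def onePow (x : ℝ) : PowerSeries ℝ :=
  PowerSeries.mk fun n => (descPochhammer ℝ n).eval x / n.factorial

/-- The polylogarithm factorial function Lif_k(t) = Σ t^n/(n!(n+1)^k). -/
def Lif (k : ℤ) : PowerSeries ℝ :=
  PowerSeries.mk fun n => 1 / (n.factorial * ((n : ℝ) + 1) ^ k)

/-- The Peters factor (1+(1+t)^λ)^(-μ) = 2^(-μ) exp(-μ log(1 + ((1+t)^λ - 1)/2)). -/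
def peters (lam mu : ℝ) : PowerSeries ℝ :=
  PowerSeries.C ((2 : ℝ) ^ (-mu)) *
    compS (PowerSeries.exp ℝ)
      (PowerSeries.C (-mu) * compS logS (PowerSeries.C (R := ℝ) (1 / 2) * (onePow lam - 1)))

/-- The Peters polynomials S_n(x;λ,μ). -/
def petersPoly (lam mu x : ℝ) (n : ℕ) : ℝ :=
  n.factorial * PowerSeries.coeff n (peters lam mu * onePow x)

/-- Poly-Cauchy polynomials of the first kind C_n^{(k)}(x). -/
def pC (k : ℤ) (x : ℝ) (n : ℕ) : ℝ :=
  n.factorial * PowerSeries.coeff n (compS (Lif k) logS * onePow (-x))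

/-- Poly-Cauchy polynomials of the second kind Ĉ_n^{(k)}(x). -/
def pChat (k : ℤ) (x : ℝ) (n : ℕ) : ℝ :=
  n.factorial * PowerSeries.coeff n (compS (Lif k) (-logS) * onePow x)

/-- The poly-Cauchy of the first kind and Peters mixed-type polynomials CP_n^{(k)}(x;λ,μ). -/
def CP (k : ℤ) (lam mu x : ℝ) (n : ℕ) : ℝ :=
  n.factorial * PowerSeries.coeff n (peters lam mu * compS (Lif k) logS * onePow (-x))

/-- The poly-Cauchy of the second kind and Peters mixed-type polynomials ĈP_n^{(k)}(x;λ,μ). -/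
def CPhat (k : ℤ) (lam mu x : ℝ) (n : ℕ) : ℝ :=
  n.factorial * PowerSeries.coeff n (peters lam mu * compS (Lif k) (-logS) * onePow x)

/-- Signed Stirling numbers of the first kind: (x)_n = Σ_l s(n,l) x^l. -/
def stirS (n l : ℕ) : ℝ := (descPochhammer ℝ n).coeff l

/-!
By Chu–Vandermonde, `(1+t)^(w+z) = (1+t)^w (1+t)^z`, so differentiating the coefficients of
`(1+t)^z` in `z` reduces to differentiating `binom(w, j)` at `w = 0`, which gives
`(-1)^(j+1)/j`, the `j`-th coefficient of `log(1+t)`. Hence `∂/∂x` multiplies the generating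
function of `CP_n^{(k)}(x)` by `-log(1+t)`, and reading off the `n`-th coefficient of the product
gives the formula.
-/

theorem coeff_onePow (n : ℕ) (z : ℝ) : coeff n (onePow z) = Ring.choose z n := by
  rw [Ring.choose_eq_smul, onePow, coeff_mk, ← Polynomial.aeval_eq_smeval,
    ← descPochhammer_map (algebraMap ℤ ℝ), Polynomial.eval_map_algebraMap, smul_eq_mul,
    inv_mul_eq_div]

theorem onePow_add (z w : ℝ) : onePow (z + w) = onePow z * onePow w := by
  ext n
  simp only [coeff_onePow, coeff_mul, Ring.add_choose_eq n (Commute.all z w)]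

theorem descPochhammer_eval_neg_one (n : ℕ) :
    (descPochhammer ℝ n).eval (-1) = (-1) ^ n * n.factorial := by
  induction n with
  | zero => simp
  | succ n ih =>
    rw [descPochhammer_succ_eval, ih, Nat.factorial_succ]
    push_cast
    ring

theorem hasDerivAt_coeff_onePow_zero (n : ℕ) :
    HasDerivAt (fun z => coeff n (onePow z)) (coeff n logS) 0 := by
  rcases n with _ | n
  · simpa [onePow, logS] using hasDerivAt_const (0 : ℝ) (1 : ℝ)
  · have slope : (descPochhammer ℝ (n + 1)).derivative.eval 0 = (-1) ^ n * n.factorial := by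
      rw [descPochhammer_succ_left]
      simp [Polynomial.derivative_mul, Polynomial.eval_comp, descPochhammer_eval_neg_one]
    simp only [onePow, coeff_mk]
    refine ((Polynomial.hasDerivAt _ 0).div_const ((n + 1).factorial : ℝ)).congr_deriv ?_
    rw [slope, logS, coeff_mk, if_neg n.succ_ne_zero, Nat.factorial_succ]
    push_cast
    field_simp
    ring

theorem hasDerivAt_coeff_mul_onePow (F : PowerSeries ℝ) (n : ℕ) (z : ℝ) :
    HasDerivAt (fun y => coeff n (F * onePow y)) (coeff n (logS * (F * onePow z))) z := by
  have shift : (fun w => coeff n (F * onePow (w + z))) =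
      fun w => ∑ p ∈ antidiagonal n, coeff p.1 (onePow w) * coeff p.2 (F * onePow z) := by
    ext w
    rw [onePow_add, mul_left_comm, coeff_mul]
  have at_zero : HasDerivAt (fun w => coeff n (F * onePow (w + z)))
      (coeff n (logS * (F * onePow z))) 0 := by
    rw [shift, coeff_mul]
    exact HasDerivAt.fun_sum fun p _ => (hasDerivAt_coeff_onePow_zero p.1).mul_const _
  have translated := HasDerivAt.comp_sub_const (f := fun w => coeff n (F * onePow (w + z))) z z
    (by rwa [sub_self])
  simpa only [sub_add_cancel] using translated

theorem coeff_mul_logS (F : PowerSeries ℝ) (n : ℕ) :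
    coeff n (F * logS) = ∑ l ∈ range n, (-1) ^ (n - l + 1) / (n - l : ℕ) * coeff l F := by
  rw [coeff_mul, Nat.sum_antidiagonal_eq_sum_range_succ_mk, sum_range_succ]
  simp only [Nat.sub_self, logS, coeff_mk, if_true, mul_zero, add_zero]
  refine sum_congr rfl fun l hl => ?_
  rw [if_neg (Nat.sub_ne_zero_of_lt (mem_range.mp hl)), mul_comm]

theorem deriv_CP_general (k : ℤ) (lam mu x : ℝ) (n : ℕ) :
    deriv (fun y => CP k lam mu y n) x =
      (n.factorial : ℝ) *
        ∑ l ∈ Finset.range n,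
          ((-1 : ℝ) ^ (n - l) / ((n - l : ℕ) * (l.factorial : ℝ))) * CP k lam mu x l := by
  set G := peters lam mu * compS (Lif k) logS
  have hderiv : HasDerivAt (fun y => CP k lam mu y n)
      (n.factorial * (coeff n (logS * (G * onePow (-x))) * -1)) x :=
    ((hasDerivAt_coeff_mul_onePow G n (-x)).comp x (hasDerivAt_neg x)).const_mul _
  rw [hderiv.deriv, mul_comm logS, coeff_mul_logS, mul_neg_one, ← sum_neg_distrib]
  congr 1
  refine sum_congr rfl fun l _ => ?_
  rw [CP]
  field_simp
  ring

theorem deriv_CP (k : ℤ) (lam mu x : ℝ) (n : ℕ) (hn : 0 < n) :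
    deriv (fun y => CP k lam mu y n) x =
      (n.factorial : ℝ) *
        ∑ l ∈ Finset.range n,
          ((-1 : ℝ) ^ (n - l) / ((n - l : ℕ) * (l.factorial : ℝ))) * CP k lam mu x l :=
  deriv_CP_general k lam mu x n
end
end

section
/- For every nonnegative integer n, Ĉ P_n^{(k)}(x;λ,μ) = Σ_{j=0}^{n} [Σ_{m=0}^{n} C(n,m) s(n-m,j) Ĉ P_m^{(k)}(0;λ,μ)] x^j, where s(·,·) denotes the signed Stirling numbers of the first kind. -/
open PowerSeries Finset

noncomputable section

lemma onePow_zero : onePow 0 = 1 := by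
  ext n
  rcases n with _ | n <;> simp [onePow, descPochhammer_eval_zero, PowerSeries.coeff_one]

lemma descPochhammer_eval_eq_sum_stirS {m N : ℕ} (hm : m ≤ N) (x : ℝ) :
    (descPochhammer ℝ m).eval x = ∑ j ∈ range (N + 1), stirS m j * x ^ j :=
  Polynomial.eval_eq_sum_range' (by rw [descPochhammer_natDegree]; omega) x

lemma factorial_mul_coeff_mul_onePow (F : PowerSeries ℝ) (x : ℝ) (n : ℕ) :
    n.factorial * coeff n (F * onePow x) =
      ∑ m ∈ range (n + 1),
        (n.choose m : ℝ) * (m.factorial * coeff m F) * (descPochhammer ℝ (n - m)).eval x := by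
  rw [coeff_mul, Nat.sum_antidiagonal_eq_sum_range_succ_mk, mul_sum]
  refine sum_congr rfl fun m hm => ?_
  have hmn : m ≤ n := Nat.lt_succ_iff.mp (mem_range.mp hm)
  have hfact : ((n - m).factorial : ℝ) ≠ 0 := by positivity
  rw [onePow, coeff_mk, Nat.cast_choose ℝ hmn]
  field_simp

lemma CPhat_eq_sum_choose_descPochhammer (k : ℤ) (lam mu x : ℝ) (n : ℕ) :
    CPhat k lam mu x n =
      ∑ m ∈ range (n + 1),
        (n.choose m : ℝ) * CPhat k lam mu 0 m * (descPochhammer ℝ (n - m)).eval x := by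
  simp only [CPhat, onePow_zero, mul_one]
  exact factorial_mul_coeff_mul_onePow _ x n

theorem CPhat_eq_sum_stirling (k : ℤ) (lam mu x : ℝ) (n : ℕ) :
    CPhat k lam mu x n =
      ∑ j ∈ Finset.range (n + 1),
        (∑ m ∈ Finset.range (n + 1),
          (n.choose m : ℝ) * stirS (n - m) j * CPhat k lam mu 0 m) * x ^ j := by
  rw [CPhat_eq_sum_choose_descPochhammer]
  calc ∑ m ∈ range (n + 1), (n.choose m : ℝ) * CPhat k lam mu 0 m *
          (descPochhammer ℝ (n - m)).eval x
      = ∑ m ∈ range (n + 1), ∑ j ∈ range (n + 1),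
          (n.choose m : ℝ) * stirS (n - m) j * CPhat k lam mu 0 m * x ^ j := by
        refine sum_congr rfl fun m _ => ?_
        rw [descPochhammer_eval_eq_sum_stirS (Nat.sub_le n m), mul_sum]
        exact sum_congr rfl fun j _ => by ring
    _ = _ := by
        rw [sum_comm]
        simp only [sum_mul]
end
end
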